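/- For the (L,R)-random walk with sojourn time T_n in ℤ^† = {0,1,2,…}, for every x, y ∈ (0,1) and every i ∈ {0,…,M−1}: K_i(x,0) = G_i(x) − Σ_{j=0}^{M−1} H°_{i+M, j}(x) · G_{j−M}(x), and K_i(0,y) = G_i(y) − y·Σ_{j=0}^{2M−1} π_{j−i} G_j(y) − y·Σ_{j=0}^{M−1} Σ_{k=−M}^{−1} π_{k−i} H°_{kj}(y) · G_j(y). -/

import Mathlib

open MeasureTheory ProbabilityTheory
open scoped Classical

noncomputable section

namespace LRWalk

variable {Ω : Type*} [MeasurableSpace Ω]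

/-- Position of the `(L,R)`-random walk started at `i` after `m` steps,
`X_m = i + U_1 + ⋯ + U_m`. -/
def pos (U : ℕ → Ω → ℤ) (i : ℤ) (m : ℕ) (ω : Ω) : ℤ :=
  i + ∑ ℓ ∈ Finset.Icc 1 m, U ℓ ω

/-- `j ∈ E° = {0,…,M−1}`. -/
def inEo (M : ℕ) (j : ℤ) : Prop := 0 ≤ j ∧ j ≤ (M : ℤ) - 1

/-- `τ° = m`, where `τ° = inf{m ≥ 1 : X_m ∈ {0,…,M−1}}` for the walk started at `i`. -/
def tauOEq (U : ℕ → Ω → ℤ) (M : ℕ) (i : ℤ) (m : ℕ) (ω : Ω) : Prop :=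
  1 ≤ m ∧ (∀ k, 1 ≤ k → k < m → ¬ inEo M (pos U i k ω)) ∧ inEo M (pos U i m ω)

/-- `H°_{ij}(x) = Σ_{m ≥ 1} P_i(τ° = m, X_m = j)·x^m`. -/
def Hcirc (μ : Measure Ω) (U : ℕ → Ω → ℤ) (M : ℕ) (i j : ℤ) (x : ℝ) : ℝ :=
  ∑' m : ℕ, (μ {ω | tauOEq U M i m ω ∧ pos U i m ω = j}).toReal * x ^ m

/-- `G_{ij}(x) = Σ_{m ≥ 0} P_i(X_m = j)·x^m`. -/
def Gpoint (μ : Measure Ω) (U : ℕ → Ω → ℤ) (i j : ℤ) (x : ℝ) : ℝ :=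
  ∑' m : ℕ, (μ {ω | pos U i m ω = j}).toReal * x ^ m

/-- Sojourn time `T_n = #{m ∈ {1,…,n} : X_m ≥ 0}` of the walk started at `i`. -/
def T (U : ℕ → Ω → ℤ) (i : ℤ) (n : ℕ) (ω : Ω) : ℕ :=
  ((Finset.Icc 1 n).filter (fun m => 0 ≤ pos U i m ω)).card

/-- `G_i(x) = Σ_{m ≥ 0} P_i(X_m ∈ F)·x^m`. -/
def Gset (μ : Measure Ω) (U : ℕ → Ω → ℤ) (F : Set ℤ) (i : ℤ) (x : ℝ) : ℝ :=
  ∑' m : ℕ, (μ {ω | pos U i m ω ∈ F}).toReal * x ^ m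

/-- `K_i(x,0) = Σ_{n ≥ 0} P_i(T_n = n, X_n ∈ F)·x^n`. -/
def Kx0 (μ : Measure Ω) (U : ℕ → Ω → ℤ) (F : Set ℤ) (i : ℤ) (x : ℝ) : ℝ :=
  ∑' n : ℕ, (μ {ω | T U i n ω = n ∧ pos U i n ω ∈ F}).toReal * x ^ n

/-- `K_i(0,y) = Σ_{n ≥ 0} P_i(T_n = 0, X_n ∈ F)·y^n`. -/
def K0y (μ : Measure Ω) (U : ℕ → Ω → ℤ) (F : Set ℤ) (i : ℤ) (y : ℝ) : ℝ :=
  ∑' n : ℕ, (μ {ω | T U i n ω = 0 ∧ pos U i n ω ∈ F}).toReal * y ^ n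

/-- `K_i(x,y) = Σ_{n ≥ 0} Σ_{m=0}^{n} P_i(T_n = m, X_n ∈ F)·x^m·y^{n−m}`. -/
def Kxy (μ : Measure Ω) (U : ℕ → Ω → ℤ) (F : Set ℤ) (i : ℤ) (x y : ℝ) : ℝ :=
  ∑' n : ℕ, ∑ m ∈ Finset.range (n + 1),
    (μ {ω | T U i n ω = m ∧ pos U i n ω ∈ F}).toReal * x ^ m * y ^ (n - m)
end LRWalk

/-!
Both identities come from the first-entrance decomposition into `E° = {0,…,M-1}`:
for every start `a`, `G_a = Ĝ_a + Σ_{j ∈ E°} H°_{aj} G_j`, where `Ĝ_a` (`Gtaboo`) counts the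
paths that avoid `E°` (`τ° > n`). At a fixed time `n` this is the Markov property at the
deterministic time `τ° = m`: the event `{τ° = m, X_m = j}` depends on the first `m` steps,
which are independent of the later ones, and the later steps, being i.i.d., form a fresh walk.

Jumps lie a.s. in `[-M, M]`, so the walk cannot jump over a window of `M` consecutive integers.
Started from `i + M` with target `F + M`, avoiding `E°` therefore means that the walk started
from `i` stays nonnegative, which gives `K_i(x,0)`. For `K_i(0,y)` condition on `X_1 = k`:
`G_i = 1_F(i) + y Σ_k π_{k-i} G_k` over `k ∈ [-M, 2M-1]`, while `T_{n+1} = 0` forces `k < 0`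
followed by a negative path, which from `k < 0` is the same as avoiding `E°`; so
`K_i(0,y) = 1_F(i) + y Σ_{k<0} π_{k-i} Ĝ_k`, and the decomposition of `G_k` for `k < 0`
finishes the proof.
-/

namespace LRWalk

section IID

variable {Ω : Type*} {U : ℕ → Ω → ℤ} {p q : (ℕ → ℤ) → Prop} {s t : Finset ℕ}

lemma setOf_eq_preimage_restrict (hp : DependsOn p s) :
    {ω | p (fun ℓ => U ℓ ω)} =
      (fun ω (ℓ : s) => U ℓ ω) ⁻¹' {w | p (fun ℓ => if h : ℓ ∈ s then w ⟨ℓ, h⟩ else 0)} :=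
  Set.ext fun _ => iff_of_eq <| hp fun ℓ hℓ => by simp [Finset.mem_coe.1 hℓ]

variable [MeasurableSpace Ω] {μ : Measure Ω}

lemma measurableSet_setOf_of_dependsOn (hU : ∀ ℓ, Measurable (U ℓ)) (hp : DependsOn p s) :
    MeasurableSet {ω | p (fun ℓ => U ℓ ω)} := by
  rw [setOf_eq_preimage_restrict hp]
  refine measurable_pi_lambda _ (fun ℓ : s => hU ℓ) ?_
  exact (Set.to_countable _).measurableSet

lemma measure_setOf_and_eq_mul (hU : ∀ ℓ, Measurable (U ℓ)) (hindep : iIndepFun U μ)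
    (hst : Disjoint s t) (hp : DependsOn p s) (hq : DependsOn q t) :
    μ {ω | p (fun ℓ => U ℓ ω) ∧ q (fun ℓ => U ℓ ω)}
      = μ {ω | p (fun ℓ => U ℓ ω)} * μ {ω | q (fun ℓ => U ℓ ω)} := by
  rw [Set.ofPred_and, setOf_eq_preimage_restrict hp, setOf_eq_preimage_restrict hq]
  exact (hindep.indepFun_finset s t hst hU).measure_inter_preimage_eq_mul _ _
    (Set.to_countable _).measurableSet (Set.to_countable _).measurableSet

lemma DependsOn.comp_add {r : ℕ} (hq : DependsOn q (Finset.Icc 1 r)) (m : ℕ) :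
    DependsOn (fun v : ℕ → ℤ => q (fun ℓ => v (ℓ + m))) (Finset.Icc (1 + m) (r + m)) :=
  fun _ _ h => hq fun ℓ hℓ => h (ℓ + m) (by simp_all)

lemma DependsOn.and {I : Set ℕ} (hp : DependsOn p I)
    (hq : DependsOn q I) : DependsOn (fun v => p v ∧ q v) I :=
  fun _ _ h => congrArg₂ And (hp h) (hq h)

variable [IsProbabilityMeasure μ] {ν : Measure ℤ}

lemma measure_setOf_comp_eq_pi (hU : ∀ ℓ, Measurable (U ℓ)) (hindep : iIndepFun U μ)
    (hlaw : ∀ ℓ, μ.map (U ℓ) = ν) {g : ℕ → ℕ} (hg : g.Injective) (hp : DependsOn p s) :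
    μ {ω | p (fun ℓ => U (g ℓ) ω)}
      = Measure.pi (fun _ : s => ν) {w | p (fun ℓ => if h : ℓ ∈ s then w ⟨ℓ, h⟩ else 0)} := by
  have hindep_s : iIndepFun (fun (ℓ : s) => U (g ℓ)) μ :=
    hindep.precomp (hg.comp Subtype.val_injective)
  rw [setOf_eq_preimage_restrict (U := fun ℓ => U (g ℓ)) hp, ← Measure.map_apply
    (measurable_pi_lambda _ fun ℓ => hU _) (Set.to_countable _).measurableSet,
    (iIndepFun_iff_map_fun_eq_pi_map fun ℓ => (hU _).aemeasurable).1 hindep_s]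
  simp only [hlaw]

lemma measure_setOf_comp_eq (hU : ∀ ℓ, Measurable (U ℓ)) (hindep : iIndepFun U μ)
    (hlaw : ∀ ℓ, μ.map (U ℓ) = ν) {g : ℕ → ℕ} (hg : g.Injective) (hp : DependsOn p s) :
    μ {ω | p (fun ℓ => U (g ℓ) ω)} = μ {ω | p (fun ℓ => U ℓ ω)} :=
  (measure_setOf_comp_eq_pi hU hindep hlaw hg hp).trans
    (measure_setOf_comp_eq_pi hU hindep hlaw Function.injective_id hp).symm

lemma measureReal_setOf_and_shift_eq_mul (hU : ∀ ℓ, Measurable (U ℓ))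
    (hindep : iIndepFun U μ) (hlaw : ∀ ℓ, μ.map (U ℓ) = ν) {m r : ℕ}
    (hp : DependsOn p (Finset.Icc 1 m)) (hq : DependsOn q (Finset.Icc 1 r)) :
    μ.real {ω | p (fun ℓ => U ℓ ω) ∧ q (fun ℓ => U (ℓ + m) ω)}
      = μ.real {ω | p (fun ℓ => U ℓ ω)} * μ.real {ω | q (fun ℓ => U ℓ ω)} := by
  have hdisj : Disjoint (Finset.Icc 1 m) (Finset.Icc (1 + m) (r + m)) :=
    Finset.disjoint_left.2 fun ℓ h₁ h₂ => by simp only [Finset.mem_Icc] at h₁ h₂; omega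
  simp only [Measure.real, measure_setOf_and_eq_mul hU hindep hdisj hp (DependsOn.comp_add hq m),
    measure_setOf_comp_eq hU hindep hlaw (add_left_injective m) hq, ENNReal.toReal_mul]

variable {π : ℤ → ℝ}

lemma map_eq_map_of_measureReal_eq (hU : ∀ ℓ, Measurable (U ℓ))
    (hdist : ∀ ℓ k, μ.real {ω | U ℓ ω = k} = π k) (ℓ ℓ' : ℕ) : μ.map (U ℓ) = μ.map (U ℓ') :=
  Measure.ext_of_singleton fun k => by
    rw [Measure.map_apply (hU ℓ) (measurableSet_singleton k),
      Measure.map_apply (hU ℓ') (measurableSet_singleton k)]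
    exact (ENNReal.toReal_eq_toReal_iff' (measure_ne_top _ _) (measure_ne_top _ _)).1
      ((hdist ℓ k).trans (hdist ℓ' k).symm)

lemma ae_mem_Icc_of_sum_eq_one (hU : ∀ ℓ, Measurable (U ℓ))
    (hdist : ∀ ℓ k, μ.real {ω | U ℓ ω = k} = π k) {lo hi : ℤ}
    (hsum : ∑ k ∈ Finset.Icc lo hi, π k = 1) : ∀ᵐ ω ∂μ, ∀ ℓ, U ℓ ω ∈ Set.Icc lo hi := by
  refine ae_all_iff.2 fun ℓ => ?_
  have hmeas : MeasurableSet (U ℓ ⁻¹' (Finset.Icc lo hi : Set ℤ)) :=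
    hU ℓ (Set.to_countable _).measurableSet
  have hone : μ.real (U ℓ ⁻¹' (Finset.Icc lo hi : Set ℤ)) = 1 := by
    rw [← sum_measureReal_preimage_singleton _ fun k _ => hU ℓ (measurableSet_singleton k)]
    exact (Finset.sum_congr rfl fun k _ => hdist ℓ k).trans hsum
  have hae := (ae_mem_iff_measure_eq (μ := μ) hmeas.nullMeasurableSet).2
    (by rw [measure_univ]; exact (ENNReal.toReal_eq_one_iff _).1 hone)
  simpa using hae

end IID

section Walk

variable {Ω : Type*} {U : ℕ → Ω → ℤ} {M : ℕ} {i a j c : ℤ} {m n r : ℕ} {ω : Ω} {F : Set ℤ}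

-- Events of the walk are predicates on the step sequence `fun ℓ => U ℓ ω`; this works because
-- `pos coord a n (fun ℓ => U ℓ ω)` unfolds to `pos U a n ω`.
abbrev coord (ℓ : ℕ) (v : ℕ → ℤ) : ℤ := v ℓ

def tauOGt (U : ℕ → Ω → ℤ) (M : ℕ) (a : ℤ) (n : ℕ) (ω : Ω) : Prop :=
  ∀ k, 1 ≤ k → k ≤ n → ¬ inEo M (pos U a k ω)

@[simp]
lemma pos_zero : pos U a 0 ω = a := by simp [pos]

lemma pos_succ : pos U a (m + 1) ω = pos U a m ω + U (m + 1) ω := by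
  simp only [pos, Finset.sum_Icc_succ_top (Nat.le_add_left 1 m), add_assoc]

lemma pos_one : pos U a 1 ω = a + U 1 ω := by
  simpa using pos_succ (U := U) (a := a) (m := 0) (ω := ω)

lemma pos_add : pos U a (m + r) ω = pos (fun ℓ => U (ℓ + m)) (pos U a m ω) r ω := by
  induction r with
  | zero => simp
  | succ r ih => rw [← add_assoc, pos_succ, ih, pos_succ, add_comm m r, add_right_comm]

lemma pos_add_start : pos U (a + c) m ω = pos U a m ω + c := by
  simp only [pos]; ring

lemma pos_eq_of_eqOn {v w : ℕ → ℤ} (h : ∀ ℓ ∈ (Finset.Icc 1 n : Set ℕ), v ℓ = w ℓ)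
    {k : ℕ} (hk : k ≤ n) : pos coord a k v = pos coord a k w :=
  congrArg (a + ·) <| Finset.sum_congr rfl fun ℓ hℓ =>
    h ℓ (by simp only [Finset.coe_Icc, Set.mem_Icc, Finset.mem_Icc] at hℓ ⊢; omega)

lemma dependsOn_pos_mem : DependsOn (fun v => pos coord a n v ∈ F) (Finset.Icc 1 n) :=
  fun _ _ h => by simp only [pos_eq_of_eqOn h le_rfl]

lemma dependsOn_tauOEq : DependsOn (fun v => tauOEq coord M a m v ∧ pos coord a m v = j)
    (Finset.Icc 1 m) := by
  intro v w h
  have e : ∀ k ≤ m, pos coord a k v = pos coord a k w := fun k hk => pos_eq_of_eqOn h hk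
  simp only [tauOEq, e m le_rfl]
  congr! 4 with k
  exact imp_congr_right fun _ => imp_congr_right fun hkm => by rw [e k hkm.le]

lemma dependsOn_tauOGt : DependsOn (fun v => tauOGt coord M a n v ∧ pos coord a n v ∈ F)
    (Finset.Icc 1 n) := by
  intro v w h
  have e : ∀ k ≤ n, pos coord a k v = pos coord a k w := fun k hk => pos_eq_of_eqOn h hk
  simp only [tauOGt, e n le_rfl]
  congr! 2 with k
  exact imp_congr_right fun _ => imp_congr_right fun hkn => by rw [e k hkn]

lemma exists_tauOEq_of_not_tauOGt (h : ¬ tauOGt U M a n ω) : ∃ m ≤ n, tauOEq U M a m ω := by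
  classical
  simp only [tauOGt, not_forall, not_not] at h
  obtain ⟨k, hk1, hkn, hk⟩ := h
  have hex : ∃ k, 1 ≤ k ∧ inEo M (pos U a k ω) := ⟨k, hk1, hk⟩
  refine ⟨Nat.find hex, (Nat.find_min' hex ⟨hk1, hk⟩).trans hkn, (Nat.find_spec hex).1,
    fun l hl hlt hin => Nat.find_min hex hlt ⟨hl, hin⟩, (Nat.find_spec hex).2⟩

lemma tauOEq.unique {m' : ℕ} (h : tauOEq U M a m ω) (h' : tauOEq U M a m' ω) : m = m' := by
  rcases lt_trichotomy m m' with hlt | heq | hlt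
  · exact absurd h.2.2 (h'.2.1 m h.1 hlt)
  · exact heq
  · exact absurd h'.2.2 (h.2.1 m' h'.1 hlt)

lemma tauOGt.not_tauOEq (h : tauOGt U M a n ω) (hm : m ≤ n) : ¬ tauOEq U M a m ω :=
  fun h' => h m h'.1 hm h'.2.2

lemma T_eq_self_iff : T U i n ω = n ↔ ∀ k ∈ Finset.Icc 1 n, 0 ≤ pos U i k ω := by
  rw [T, ← Finset.card_filter_eq_iff, Nat.card_Icc, Nat.add_sub_cancel]

lemma T_eq_zero_iff : T U i n ω = 0 ↔ ∀ k ∈ Finset.Icc 1 n, pos U i k ω < 0 := by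
  simp [T]

lemma exists_mem_Ico_of_neg {f : ℕ → ℤ} (h0 : 0 ≤ f 0) (hstep : ∀ k, f k - c ≤ f (k + 1))
    (hn : f n < 0) : ∃ k, 1 ≤ k ∧ k ≤ n ∧ -c ≤ f k ∧ f k < 0 := by
  classical
  have hex : ∃ k, f k < 0 := ⟨n, hn⟩
  obtain ⟨k, hk⟩ : ∃ k, Nat.find hex = k + 1 :=
    Nat.exists_eq_succ_of_ne_zero fun h0' => by simpa [h0'] using (h0.trans_lt' (Nat.find_spec hex))
  have hprev : 0 ≤ f k := not_lt.1 (Nat.find_min hex (by omega))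
  refine ⟨k + 1, le_add_self, hk ▸ Nat.find_min' hex hn, ?_, hk ▸ Nat.find_spec hex⟩
  linarith [hstep k]

lemma tauOGt_add_iff_T_eq (hi : 0 ≤ i) (hdown : ∀ ℓ, -(M : ℤ) ≤ U ℓ ω) :
    tauOGt U M (i + M) n ω ↔ T U i n ω = n := by
  simp only [T_eq_self_iff, tauOGt, inEo, pos_add_start, Finset.mem_Icc]
  refine ⟨fun h k hk => not_lt.1 fun hneg => ?_, fun h k hk hkn ⟨_, hle⟩ => ?_⟩
  · have hstep (l : ℕ) : pos U i l ω - M ≤ pos U i (l + 1) ω := by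
      rw [pos_succ]; linarith [hdown (l + 1)]
    obtain ⟨l, hl1, hlk, hlo, hhi⟩ := exists_mem_Ico_of_neg (f := fun l => pos U i l ω)
      (by simpa using hi) hstep hneg
    exact h l hl1 (hlk.trans hk.2) ⟨by omega, by omega⟩
  · linarith [h k ⟨hk, hkn⟩]

lemma tauOGt_iff_forall_neg (ha : a < 0) (hup : ∀ ℓ, U ℓ ω ≤ M) :
    tauOGt U M a n ω ↔ ∀ k ∈ Finset.Icc 1 n, pos U a k ω < 0 := by
  simp only [tauOGt, inEo, Finset.mem_Icc]
  refine ⟨fun h k hk => not_le.1 fun hnn => ?_, fun h k hk hkn ⟨hge, _⟩ => ?_⟩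
  · have hstep (l : ℕ) : -1 - pos U a l ω - M ≤ -1 - pos U a (l + 1) ω := by
      rw [pos_succ]; linarith [hup (l + 1)]
    obtain ⟨l, hl1, hlk, hlo, hhi⟩ := exists_mem_Ico_of_neg (f := fun l => -1 - pos U a l ω)
      (by simp; omega) hstep (show -1 - pos U a k ω < 0 by omega)
    exact h l hl1 (hlk.trans hk.2) ⟨by omega, by omega⟩
  · linarith [h k ⟨hk, hkn⟩]

lemma setOf_pos_mem_eq_union :
    {ω | pos U a n ω ∈ F} = {ω | tauOGt U M a n ω ∧ pos U a n ω ∈ F} ∪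
      ⋃ q ∈ Finset.Icc 0 ((M : ℤ) - 1) ×ˢ Finset.range (n + 1),
        {ω | (tauOEq U M a q.2 ω ∧ pos U a q.2 ω = q.1) ∧ pos U a n ω ∈ F} := by
  ext ω
  simp only [Set.mem_union, Set.mem_iUnion, Set.mem_ofPred_eq, Finset.mem_product,
    Finset.mem_Icc, Finset.mem_range, exists_prop, Prod.exists]
  refine ⟨fun hF => ?_, by rintro (⟨_, hF⟩ | ⟨_, _, _, _, hF⟩) <;> exact hF⟩
  by_cases hgt : tauOGt U M a n ω
  · exact Or.inl ⟨hgt, hF⟩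
  · obtain ⟨m, hmn, hm⟩ := exists_tauOEq_of_not_tauOGt hgt
    exact Or.inr ⟨_, m, ⟨hm.2.2, by omega⟩, ⟨hm, rfl⟩, hF⟩

lemma T_succ_eq_zero_iff (hi : 0 ≤ i) (hdown : ∀ ℓ, -(M : ℤ) ≤ U ℓ ω)
    (hup : ∀ ℓ, U ℓ ω ≤ M) : T U i (n + 1) ω = 0 ↔
      pos U i 1 ω ∈ Finset.Icc (-(M : ℤ)) (-1) ∧
        tauOGt (fun ℓ => U (ℓ + 1)) M (pos U i 1 ω) n ω := by
  have hshift (k : ℕ) : pos U i (1 + k) ω = pos (fun ℓ => U (ℓ + 1)) (pos U i 1 ω) k ω := pos_add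
  have hlow : -(M : ℤ) ≤ pos U i 1 ω := by rw [pos_one]; linarith [hdown 1]
  rw [T_eq_zero_iff, Finset.mem_Icc]
  constructor
  · intro h
    have h1 : pos U i 1 ω < 0 := h 1 (by simp)
    refine ⟨⟨hlow, by omega⟩, (tauOGt_iff_forall_neg h1 fun ℓ => hup _).2 fun k hk => ?_⟩
    rw [← hshift]
    exact h _ (by simp only [Finset.mem_Icc] at hk ⊢; omega)
  · rintro ⟨⟨_, h1⟩, hgt⟩ k hk
    simp only [Finset.mem_Icc] at hk
    obtain rfl | ⟨l, hl, rfl⟩ : k = 1 ∨ ∃ l, 1 ≤ l ∧ k = 1 + l := by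
      rcases Nat.lt_or_ge 1 k with hk1 | hk1
      · exact Or.inr ⟨k - 1, by omega, by omega⟩
      · exact Or.inl (by omega)
    · omega
    · rw [hshift]
      exact (tauOGt_iff_forall_neg (by omega) fun ℓ => hup _).1 hgt l
        (Finset.mem_Icc.2 ⟨hl, by omega⟩)

end Walk

section Decomposition

variable {Ω : Type*} [MeasurableSpace Ω] {μ : Measure Ω} [IsProbabilityMeasure μ] {ν : Measure ℤ}
  {U : ℕ → Ω → ℤ} {M : ℕ} {i a j : ℤ} {m n r : ℕ} {F : Set ℤ}

/-- Markov property of the walk at the deterministic time `m`. -/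
lemma measureReal_and_pos_mem_eq_mul (hU : ∀ ℓ, Measurable (U ℓ)) (hindep : iIndepFun U μ)
    (hlaw : ∀ ℓ, μ.map (U ℓ) = ν) (hmn : m ≤ n) {p : (ℕ → ℤ) → Prop}
    (hp : DependsOn p (Finset.Icc 1 m)) (hpj : ∀ v, p v → pos coord a m v = j) :
    μ.real {ω | p (fun ℓ => U ℓ ω) ∧ pos U a n ω ∈ F}
      = μ.real {ω | p (fun ℓ => U ℓ ω)} * μ.real {ω | pos U j (n - m) ω ∈ F} := by
  obtain ⟨r, rfl⟩ := Nat.exists_eq_add_of_le hmn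
  have hset : {ω | p (fun ℓ => U ℓ ω) ∧ pos U a (m + r) ω ∈ F}
      = {ω | p (fun ℓ => U ℓ ω) ∧ pos coord j r (fun ℓ => U (ℓ + m) ω) ∈ F} := by
    refine Set.ext fun ω => and_congr_right fun hpω => ?_
    have hj : pos U a m ω = j := hpj _ hpω
    rw [pos_add, hj]
    rfl
  rw [hset, measureReal_setOf_and_shift_eq_mul hU hindep hlaw hp dependsOn_pos_mem,
    Nat.add_sub_cancel_left]
  rfl

lemma measureReal_pos_mem_eq_first_entrance (hU : ∀ ℓ, Measurable (U ℓ)) (hindep : iIndepFun U μ)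
    (hlaw : ∀ ℓ, μ.map (U ℓ) = ν) (a : ℤ) (n : ℕ) :
    μ.real {ω | pos U a n ω ∈ F} = μ.real {ω | tauOGt U M a n ω ∧ pos U a n ω ∈ F} +
      ∑ j ∈ Finset.Icc 0 ((M : ℤ) - 1), ∑ m ∈ Finset.range (n + 1),
        μ.real {ω | tauOEq U M a m ω ∧ pos U a m ω = j} * μ.real {ω | pos U j (n - m) ω ∈ F} := by
  set Q := Finset.Icc 0 ((M : ℤ) - 1) ×ˢ Finset.range (n + 1)
  set C : ℤ × ℕ → Set Ω :=
    fun q => {ω | (tauOEq U M a q.2 ω ∧ pos U a q.2 ω = q.1) ∧ pos U a n ω ∈ F}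
  have hQ {q : ℤ × ℕ} (hq : q ∈ Q) : q.2 ≤ n := by
    simp only [Q, Finset.mem_product, Finset.mem_range] at hq; omega
  have hmeas : ∀ q ∈ Q, MeasurableSet (C q) := fun q hq =>
    measurableSet_setOf_of_dependsOn hU <| DependsOn.and (dependsOn_tauOEq.mono <| by
      simpa only [Finset.coe_Icc] using Set.Icc_subset_Icc le_rfl (hQ hq)) dependsOn_pos_mem
  have hdisj : ∀ q ∈ Q, Disjoint {ω | tauOGt U M a n ω ∧ pos U a n ω ∈ F} (C q) := fun q hq =>
    Set.disjoint_left.2 fun ω h h' => h.1.not_tauOEq (hQ hq) h'.1.1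
  have hpair : (Q : Set (ℤ × ℕ)).PairwiseDisjoint C := by
    intro q _ q' _ hqq'
    refine Set.disjoint_left.2 fun ω h h' => hqq' ?_
    have hm := h.1.1.unique h'.1.1
    exact Prod.ext (by rw [← h.1.2, ← h'.1.2, hm]) hm
  rw [setOf_pos_mem_eq_union, measureReal_union (Set.disjoint_iUnion₂_right.2 hdisj)
    (Q.measurableSet_biUnion hmeas) (measure_ne_top _ _) (measure_ne_top _ _),
    measureReal_biUnion_finset hpair hmeas, Finset.sum_product]
  refine congrArg _ (Finset.sum_congr rfl fun j _ => Finset.sum_congr rfl fun m hm => ?_)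
  exact measureReal_and_pos_mem_eq_mul hU hindep hlaw (by simpa [Nat.lt_succ_iff] using hm)
    dependsOn_tauOEq fun _ h => h.2

lemma measureReal_eq_sum_first_step (hU : ∀ ℓ, Measurable (U ℓ)) (hindep : iIndepFun U μ)
    (hlaw : ∀ ℓ, μ.map (U ℓ) = ν) {S : Finset ℤ} {q : ℤ → (ℕ → ℤ) → Prop}
    (hq : ∀ k, DependsOn (q k) (Finset.Icc 1 r)) {E : Set Ω}
    (hE : E =ᵐ[μ] {ω | ∃ k ∈ S, pos U i 1 ω = k ∧ q k (fun ℓ => U (ℓ + 1) ω)}) :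
    μ.real E = ∑ k ∈ S, μ.real {ω | U 1 ω = k - i} * μ.real {ω | q k (fun ℓ => U ℓ ω)} := by
  have hstep (k : ℤ) : DependsOn (fun v => pos coord i 1 v = k) (Finset.Icc 1 1) :=
    fun _ _ h => by simp only [pos_eq_of_eqOn h le_rfl]
  have hpiece (k : ℤ) : μ.real {ω | pos U i 1 ω = k ∧ q k (fun ℓ => U (ℓ + 1) ω)}
      = μ.real {ω | U 1 ω = k - i} * μ.real {ω | q k (fun ℓ => U ℓ ω)} := by
    refine (measureReal_setOf_and_shift_eq_mul hU hindep hlaw (hstep k) (hq k)).trans ?_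
    congr 3 with ω
    show pos U i 1 ω = k ↔ U 1 ω = k - i
    rw [pos_one]; omega
  have hmeas : ∀ k ∈ S, MeasurableSet {ω | pos U i 1 ω = k ∧ q k (fun ℓ => U (ℓ + 1) ω)} :=
    fun k _ => measurableSet_setOf_of_dependsOn
      (p := fun v => pos coord i 1 v = k ∧ q k (fun ℓ => v (ℓ + 1))) (s := Finset.Icc 1 (r + 1))
      hU <| DependsOn.and ((hstep k).mono (by simp))
      ((DependsOn.comp_add (hq k) 1).mono (by simpa using Set.Icc_subset_Icc_left one_le_two))
  have hpair : (S : Set ℤ).PairwiseDisjoint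
      fun k => {ω | pos U i 1 ω = k ∧ q k (fun ℓ => U (ℓ + 1) ω)} :=
    fun k _ k' _ hkk' => Set.disjoint_left.2 fun ω h h' => hkk' (h.1.symm.trans h'.1)
  have hunion : {ω | ∃ k ∈ S, pos U i 1 ω = k ∧ q k (fun ℓ => U (ℓ + 1) ω)}
      = ⋃ k ∈ S, {ω | pos U i 1 ω = k ∧ q k (fun ℓ => U (ℓ + 1) ω)} := by
    ext; simp
  rw [measureReal_congr hE, hunion, measureReal_biUnion_finset hpair hmeas]
  exact Finset.sum_congr rfl fun k _ => hpiece k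

end Decomposition

section PowerSeries

variable {ι : Type*} {S : Finset ι} {x : ℝ}

lemma summable_norm_mul_pow {a : ℕ → ℝ} (ha : ∀ n, ‖a n‖ ≤ 1) (hx : ‖x‖ < 1) :
    Summable fun n => ‖a n * x ^ n‖ :=
  Summable.of_nonneg_of_le (fun _ => norm_nonneg _)
    (fun n => by rw [norm_mul, norm_pow]; exact mul_le_of_le_one_left (by positivity) (ha n))
    (summable_geometric_of_lt_one (norm_nonneg _) hx)

lemma hasSum_sum_range_mul_mul_pow {a b : ℕ → ℝ} (ha : ∀ n, ‖a n‖ ≤ 1) (hb : ∀ n, ‖b n‖ ≤ 1)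
    (hx : ‖x‖ < 1) :
    HasSum (fun n => (∑ m ∈ Finset.range (n + 1), a m * b (n - m)) * x ^ n)
      ((∑' n, a n * x ^ n) * ∑' n, b n * x ^ n) := by
  refine (hasSum_sum_range_mul_of_summable_norm (summable_norm_mul_pow ha hx)
    (summable_norm_mul_pow hb hx)).congr_fun fun n => ?_
  rw [Finset.sum_mul]
  refine Finset.sum_congr rfl fun m hm => ?_
  rw [mul_mul_mul_comm, ← pow_add, Nat.add_sub_cancel' (Finset.mem_range_succ_iff.1 hm)]

lemma tsum_mul_pow_eq_add_sum_mul {a b : ℕ → ℝ} {h g : ι → ℕ → ℝ} (hb : ∀ n, ‖b n‖ ≤ 1)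
    (hh : ∀ j n, ‖h j n‖ ≤ 1) (hg : ∀ j n, ‖g j n‖ ≤ 1) (hx : ‖x‖ < 1)
    (hrec : ∀ n, a n = b n + ∑ j ∈ S, ∑ m ∈ Finset.range (n + 1), h j m * g j (n - m)) :
    ∑' n, a n * x ^ n
      = ∑' n, b n * x ^ n + ∑ j ∈ S, (∑' n, h j n * x ^ n) * ∑' n, g j n * x ^ n := by
  refine HasSum.tsum_eq <| ((summable_norm_mul_pow hb hx).of_norm.hasSum.add
    (hasSum_sum fun j _ => hasSum_sum_range_mul_mul_pow (hh j) (hg j) hx)).congr_fun fun n => ?_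
  rw [hrec, add_mul, Finset.sum_mul]

lemma tsum_mul_pow_eq_add_mul_sum {a : ℕ → ℝ} {c : ι → ℝ} {b : ι → ℕ → ℝ}
    (ha : ∀ n, ‖a n‖ ≤ 1) (hb : ∀ k n, ‖b k n‖ ≤ 1) (hx : ‖x‖ < 1)
    (hrec : ∀ n, a (n + 1) = ∑ k ∈ S, c k * b k n) :
    ∑' n, a n * x ^ n = a 0 + x * ∑ k ∈ S, c k * ∑' n, b k n * x ^ n := by
  have hterm : HasSum (fun n => ∑ k ∈ S, x * c k * (b k n * x ^ n))
      (∑ k ∈ S, x * c k * ∑' n, b k n * x ^ n) :=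
    hasSum_sum fun k _ => (summable_norm_mul_pow (hb k) hx).of_norm.hasSum.mul_left (x * c k)
  rw [(summable_norm_mul_pow ha hx).of_norm.tsum_eq_zero_add, pow_zero, mul_one, Finset.mul_sum]
  refine congrArg _ ((hterm.congr_fun fun n => ?_).tsum_eq.trans
    (Finset.sum_congr rfl fun k _ => mul_assoc _ _ _))
  rw [hrec, Finset.sum_mul, pow_succ]
  exact Finset.sum_congr rfl fun k _ => by ring

end PowerSeries

section GeneratingFunctions

variable {Ω : Type*} [MeasurableSpace Ω] {μ : Measure Ω} {ν : Measure ℤ}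
  {U : ℕ → Ω → ℤ} {M : ℕ} {i a : ℤ} {F : Set ℤ} {x : ℝ}

def Gtaboo (μ : Measure Ω) (U : ℕ → Ω → ℤ) (M : ℕ) (F : Set ℤ) (a : ℤ) (x : ℝ) : ℝ :=
  ∑' n : ℕ, (μ {ω | tauOGt U M a n ω ∧ pos U a n ω ∈ F}).toReal * x ^ n

lemma Gset_preimage_sub (c : ℤ) : Gset μ U ((· - c) ⁻¹' F) a x = Gset μ U F (a - c) x := by
  refine tsum_congr fun n => ?_
  congr 3 with ω
  show pos U a n ω - c ∈ F ↔ pos U (a - c) n ω ∈ F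
  have hshift : pos U a n ω = pos U (a - c) n ω + c := by rw [← pos_add_start, sub_add_cancel]
  rw [hshift, add_sub_cancel_right]

lemma Gtaboo_add_eq_Kx0 (hi : 0 ≤ i) (hdown : ∀ᵐ ω ∂μ, ∀ ℓ, -(M : ℤ) ≤ U ℓ ω) :
    Gtaboo μ U M ((· - (M : ℤ)) ⁻¹' F) (i + M) x = Kx0 μ U F i x := by
  refine tsum_congr fun n => congrArg (fun z => z.toReal * x ^ n)
    (measure_congr (Filter.eventuallyEq_set.2 ?_))
  filter_upwards [hdown] with ω hω
  show tauOGt U M (i + M) n ω ∧ pos U (i + M) n ω - M ∈ F ↔ T U i n ω = n ∧ pos U i n ω ∈ F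
  rw [tauOGt_add_iff_T_eq hi hω, pos_add_start, add_sub_cancel_right]

variable [IsProbabilityMeasure μ]

lemma norm_measureReal_le_one (s : Set Ω) : ‖μ.real s‖ ≤ 1 := by
  rw [Real.norm_of_nonneg measureReal_nonneg]
  exact measureReal_le_one

theorem Gset_eq_Gtaboo_add_sum (hU : ∀ ℓ, Measurable (U ℓ)) (hindep : iIndepFun U μ)
    (hlaw : ∀ ℓ, μ.map (U ℓ) = ν) (a : ℤ) (hx : ‖x‖ < 1) :
    Gset μ U F a x = Gtaboo μ U M F a x +
      ∑ j ∈ Finset.Icc 0 ((M : ℤ) - 1), Hcirc μ U M a j x * Gset μ U F j x :=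
  tsum_mul_pow_eq_add_sum_mul (fun _ => norm_measureReal_le_one _)
    (fun _ _ => norm_measureReal_le_one _) (fun _ _ => norm_measureReal_le_one _) hx
    (measureReal_pos_mem_eq_first_entrance hU hindep hlaw a)

theorem Gset_eq_add_sum_first_step (hU : ∀ ℓ, Measurable (U ℓ)) (hindep : iIndepFun U μ)
    (hlaw : ∀ ℓ, μ.map (U ℓ) = ν) {S : Finset ℤ} (hS : ∀ᵐ ω ∂μ, pos U i 1 ω ∈ S)
    (hx : ‖x‖ < 1) :
    Gset μ U F i x = μ.real {ω | pos U i 0 ω ∈ F} +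
      x * ∑ k ∈ S, μ.real {ω | U 1 ω = k - i} * Gset μ U F k x := by
  refine tsum_mul_pow_eq_add_mul_sum (fun _ => norm_measureReal_le_one _)
    (fun _ _ => norm_measureReal_le_one _) hx fun n =>
      measureReal_eq_sum_first_step hU hindep hlaw (fun _ => dependsOn_pos_mem) ?_
  refine Filter.eventuallyEq_set.2 ?_
  filter_upwards [hS] with ω hω
  show pos U i (n + 1) ω ∈ F ↔
    ∃ k ∈ S, pos U i 1 ω = k ∧ pos (fun ℓ => U (ℓ + 1)) k n ω ∈ F
  rw [add_comm, pos_add]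
  exact ⟨fun h => ⟨_, hω, rfl, h⟩, by rintro ⟨k, _, rfl, h⟩; exact h⟩

theorem K0y_eq_add_sum (hU : ∀ ℓ, Measurable (U ℓ)) (hindep : iIndepFun U μ)
    (hlaw : ∀ ℓ, μ.map (U ℓ) = ν) (hi : 0 ≤ i) (hdown : ∀ᵐ ω ∂μ, ∀ ℓ, -(M : ℤ) ≤ U ℓ ω)
    (hup : ∀ᵐ ω ∂μ, ∀ ℓ, U ℓ ω ≤ M) (hx : ‖x‖ < 1) :
    K0y μ U F i x = μ.real {ω | pos U i 0 ω ∈ F} +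
      x * ∑ k ∈ Finset.Icc (-(M : ℤ)) (-1), μ.real {ω | U 1 ω = k - i} * Gtaboo μ U M F k x := by
  have hrec (n : ℕ) : μ.real {ω | T U i (n + 1) ω = 0 ∧ pos U i (n + 1) ω ∈ F} =
      ∑ k ∈ Finset.Icc (-(M : ℤ)) (-1), μ.real {ω | U 1 ω = k - i} *
        μ.real {ω | tauOGt U M k n ω ∧ pos U k n ω ∈ F} := by
    refine measureReal_eq_sum_first_step hU hindep hlaw
      (q := fun k v => tauOGt coord M k n v ∧ pos coord k n v ∈ F)
      (fun _ => dependsOn_tauOGt) (Filter.eventuallyEq_set.2 ?_)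
    filter_upwards [hdown, hup] with ω hd hu
    show T U i (n + 1) ω = 0 ∧ pos U i (n + 1) ω ∈ F ↔
      ∃ k ∈ Finset.Icc (-(M : ℤ)) (-1), pos U i 1 ω = k ∧
        tauOGt (fun ℓ => U (ℓ + 1)) M k n ω ∧ pos (fun ℓ => U (ℓ + 1)) k n ω ∈ F
    rw [T_succ_eq_zero_iff hi hd hu, add_comm, pos_add]
    exact ⟨fun ⟨⟨hk, hgt⟩, h⟩ => ⟨_, hk, rfl, hgt, h⟩,
      by rintro ⟨k, hk, rfl, hgt, h⟩; exact ⟨⟨hk, hgt⟩, h⟩⟩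
  refine (tsum_mul_pow_eq_add_mul_sum (fun _ => norm_measureReal_le_one _)
    (fun _ _ => norm_measureReal_le_one _) hx hrec).trans (congrArg (· + _) ?_)
  simp [T]

theorem Kx0_eq_Gset_sub_sum (hU : ∀ ℓ, Measurable (U ℓ)) (hindep : iIndepFun U μ)
    (hlaw : ∀ ℓ, μ.map (U ℓ) = ν) (hi : 0 ≤ i) (hdown : ∀ᵐ ω ∂μ, ∀ ℓ, -(M : ℤ) ≤ U ℓ ω)
    (hx : ‖x‖ < 1) :
    Kx0 μ U F i x = Gset μ U F i x -
      ∑ j ∈ Finset.Icc 0 ((M : ℤ) - 1), Hcirc μ U M (i + M) j x * Gset μ U F (j - M) x := by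
  have h := Gset_eq_Gtaboo_add_sum (M := M) (F := (· - (M : ℤ)) ⁻¹' F) hU hindep hlaw (i + M) hx
  simp only [Gset_preimage_sub, Gtaboo_add_eq_Kx0 hi hdown, add_sub_cancel_right] at h
  linarith

theorem K0y_eq_Gset_sub_sum (hU : ∀ ℓ, Measurable (U ℓ)) (hindep : iIndepFun U μ)
    (hlaw : ∀ ℓ, μ.map (U ℓ) = ν) (hi0 : 0 ≤ i) (hiM : i ≤ (M : ℤ) - 1)
    (hdown : ∀ᵐ ω ∂μ, ∀ ℓ, -(M : ℤ) ≤ U ℓ ω) (hup : ∀ᵐ ω ∂μ, ∀ ℓ, U ℓ ω ≤ M) (hx : ‖x‖ < 1) :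
    K0y μ U F i x = Gset μ U F i x
      - x * ∑ j ∈ Finset.Icc 0 (2 * (M : ℤ) - 1), μ.real {ω | U 1 ω = j - i} * Gset μ U F j x
      - x * ∑ j ∈ Finset.Icc 0 ((M : ℤ) - 1), ∑ k ∈ Finset.Icc (-(M : ℤ)) (-1),
          μ.real {ω | U 1 ω = k - i} * Hcirc μ U M k j x * Gset μ U F j x := by
  have hS : ∀ᵐ ω ∂μ, pos U i 1 ω ∈ Finset.Icc (-(M : ℤ)) (-1) ∪ Finset.Icc 0 (2 * M - 1) := by
    filter_upwards [hdown, hup] with ω hd hu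
    simp only [pos_one, Finset.mem_union, Finset.mem_Icc]
    have := hd 1
    have := hu 1
    omega
  have hG := Gset_eq_add_sum_first_step (F := F) hU hindep hlaw hS hx
  rw [Finset.sum_union (Finset.disjoint_left.2 fun k h₁ h₂ => by
    simp only [Finset.mem_Icc] at h₁ h₂; omega)] at hG
  have hneg : ∑ k ∈ Finset.Icc (-(M : ℤ)) (-1), μ.real {ω | U 1 ω = k - i} * Gset μ U F k x
      = ∑ k ∈ Finset.Icc (-(M : ℤ)) (-1), μ.real {ω | U 1 ω = k - i} * Gtaboo μ U M F k x
        + ∑ j ∈ Finset.Icc 0 ((M : ℤ) - 1), ∑ k ∈ Finset.Icc (-(M : ℤ)) (-1),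
            μ.real {ω | U 1 ω = k - i} * Hcirc μ U M k j x * Gset μ U F j x := by
    rw [Finset.sum_comm, ← Finset.sum_add_distrib]
    refine Finset.sum_congr rfl fun k _ => ?_
    rw [Gset_eq_Gtaboo_add_sum (M := M) hU hindep hlaw k hx, mul_add, Finset.mul_sum]
    simp only [mul_assoc]
  rw [K0y_eq_add_sum hU hindep hlaw hi0 hdown hup hx, hG, hneg]
  ring

end GeneratingFunctions

end LRWalk

theorem LRWalk.Kx0_K0y_formulas_general
    (Ω : Type*) [MeasurableSpace Ω] (μ : MeasureTheory.Measure Ω)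
    [MeasureTheory.IsProbabilityMeasure μ]
    (L R : ℕ) (M : ℕ) (hM : M = max L R)
    (π : ℤ → ℝ)
    (hsum : ∑ k ∈ Finset.Icc (-(L : ℤ)) (R : ℤ), π k = 1)
    (U : ℕ → Ω → ℤ) (hmeas : ∀ ℓ, Measurable (U ℓ))
    (hindep : ProbabilityTheory.iIndepFun U μ)
    (hdist : ∀ ℓ k, (μ {ω | U ℓ ω = k}).toReal = π k)
    (F : Set ℤ)
    (x y : ℝ) (hx : x ∈ Set.Ioo (0 : ℝ) 1) (hy : y ∈ Set.Ioo (0 : ℝ) 1)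
    (i : ℤ) (hi0 : 0 ≤ i) (hiM : i ≤ (M : ℤ) - 1) :
    (Kx0 μ U F i x
      = Gset μ U F i x
        - ∑ j ∈ Finset.Icc (0 : ℤ) ((M : ℤ) - 1),
            Hcirc μ U M (i + M) j x * Gset μ U F (j - M) x) ∧
    (K0y μ U F i y
      = Gset μ U F i y
        - y * ∑ j ∈ Finset.Icc (0 : ℤ) (2 * (M : ℤ) - 1), π (j - i) * Gset μ U F j y
        - y * ∑ j ∈ Finset.Icc (0 : ℤ) ((M : ℤ) - 1),
            ∑ k ∈ Finset.Icc (-(M : ℤ)) (-1), π (k - i) * Hcirc μ U M k j y * Gset μ U F j y) := by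
  have hdist' : ∀ ℓ k, μ.real {ω | U ℓ ω = k} = π k := hdist
  have hlaw (ℓ : ℕ) := map_eq_map_of_measureReal_eq hmeas hdist' ℓ 0
  have hsteps := ae_mem_Icc_of_sum_eq_one hmeas hdist' hsum
  have hLM : (L : ℤ) ≤ M := by rw [hM]; exact_mod_cast le_max_left L R
  have hRM : (R : ℤ) ≤ M := by rw [hM]; exact_mod_cast le_max_right L R
  have hdown : ∀ᵐ ω ∂μ, ∀ ℓ, -(M : ℤ) ≤ U ℓ ω := hsteps.mono fun ω h ℓ => by linarith [(h ℓ).1]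
  have hup : ∀ᵐ ω ∂μ, ∀ ℓ, U ℓ ω ≤ M := hsteps.mono fun ω h ℓ => (h ℓ).2.trans hRM
  have hnorm {z : ℝ} (hz : z ∈ Set.Ioo (0 : ℝ) 1) : ‖z‖ < 1 := by
    rw [Real.norm_of_nonneg hz.1.le]; exact hz.2
  refine ⟨Kx0_eq_Gset_sub_sum hmeas hindep hlaw hi0 hdown (hnorm hx), ?_⟩
  simpa only [hdist'] using
    K0y_eq_Gset_sub_sum hmeas hindep hlaw hi0 hiM hdown hup (hnorm hy)

/-- **Boundary values of the sojourn-time generating function** for the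
`(L,R)`-random walk: for `x, y ∈ (0,1)` and `i ∈ {0,…,M−1}`,
`K_i(x,0) = G_i(x) − Σ_{j=0}^{M−1} H°_{i+M,j}(x)·G_{j−M}(x)` and
`K_i(0,y) = G_i(y) − y·Σ_{j=0}^{2M−1} π_{j−i}·G_j(y)
− y·Σ_{j=0}^{M−1} Σ_{k=−M}^{−1} π_{k−i}·H°_{kj}(y)·G_j(y)`. -/
theorem LRWalk.Kx0_K0y_formulas
    (Ω : Type*) [MeasurableSpace Ω] (μ : MeasureTheory.Measure Ω)
    [MeasureTheory.IsProbabilityMeasure μ]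
    (L R : ℕ) (hL : 1 ≤ L) (hR : 1 ≤ R) (M : ℕ) (hM : M = max L R)
    (π : ℤ → ℝ) (hnn : ∀ k, 0 ≤ π k)
    (hsupp : ∀ k : ℤ, k < -(L : ℤ) ∨ (R : ℤ) < k → π k = 0)
    (hsum : ∑ k ∈ Finset.Icc (-(L : ℤ)) (R : ℤ), π k = 1)
    (U : ℕ → Ω → ℤ) (hmeas : ∀ ℓ, Measurable (U ℓ))
    (hindep : ProbabilityTheory.iIndepFun U μ)
    (hdist : ∀ ℓ k, (μ {ω | U ℓ ω = k}).toReal = π k)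
    (F : Set ℤ)
    (x y : ℝ) (hx : x ∈ Set.Ioo (0 : ℝ) 1) (hy : y ∈ Set.Ioo (0 : ℝ) 1)
    (i : ℤ) (hi0 : 0 ≤ i) (hiM : i ≤ (M : ℤ) - 1) :
    (Kx0 μ U F i x
      = Gset μ U F i x
        - ∑ j ∈ Finset.Icc (0 : ℤ) ((M : ℤ) - 1),
            Hcirc μ U M (i + M) j x * Gset μ U F (j - M) x) ∧
    (K0y μ U F i y
      = Gset μ U F i y
        - y * ∑ j ∈ Finset.Icc (0 : ℤ) (2 * (M : ℤ) - 1), π (j - i) * Gset μ U F j y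
        - y * ∑ j ∈ Finset.Icc (0 : ℤ) ((M : ℤ) - 1),
            ∑ k ∈ Finset.Icc (-(M : ℤ)) (-1), π (k - i) * Hcirc μ U M k j y * Gset μ U F j y) :=
  LRWalk.Kx0_K0y_formulas_general Ω μ L R M hM π hsum U hmeas hindep hdist F x y hx hy i hi0 hiM
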